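/- For every σ > 0 and every real z, the quantity 2 + ((1 − Φ(z))/φ(z))·(σ − z) is strictly positive; moreover for z > 0 it is strictly greater than 1. -/

import Mathlib

open MeasureTheory Real Set Filter
open Topology

/-- Standard normal PDF. -/
noncomputable def stdPdf (z : ℝ) : ℝ := (Real.sqrt (2 * Real.pi))⁻¹ * Real.exp (-z ^ 2 / 2)

/-- Standard normal CDF. -/
noncomputable def stdCdf (z : ℝ) : ℝ := ∫ t in Set.Iic z, stdPdf t

/-- PDF of a Lognormal(0, σ²) random variable. -/
noncomputable def lnPdf (σ h : ℝ) : ℝ :=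
  (h * σ * Real.sqrt (2 * Real.pi))⁻¹ * Real.exp (-(Real.log h) ^ 2 / (2 * σ ^ 2))

/-- CDF of the valuation V = b + a/H, H ~ Lognormal(0, σ²). -/
noncomputable def Fval (σ a b v : ℝ) : ℝ := stdCdf (Real.log ((v - b) / a) / σ)

/-- PDF of the valuation V = b + a/H, via change of variables. -/
noncomputable def fval (σ a b v : ℝ) : ℝ := lnPdf σ (a / (v - b)) * (a / (v - b) ^ 2)

/-- Virtual valuation c(v) = v + F(v)/f(v). -/
noncomputable def cval (σ a b v : ℝ) : ℝ := v + Fval σ a b v / fval σ a b v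


lemma stdPdf_pos (z : ℝ) : 0 < stdPdf z := by
  unfold stdPdf
  positivity

lemma stdPdf_eq (z : ℝ) : stdPdf z = (Real.sqrt (2 * Real.pi))⁻¹ * Real.exp (-(1/2) * z ^ 2) := by
  unfold stdPdf; ring_nf

lemma integrable_stdPdf : Integrable stdPdf := by
  have h := (integrable_exp_neg_mul_sq (by norm_num : (0:ℝ) < 1/2)).const_mul
    (Real.sqrt (2 * Real.pi))⁻¹
  exact h.congr (Filter.Eventually.of_forall fun x => (stdPdf_eq x).symm)

lemma integral_stdPdf : ∫ t, stdPdf t = 1 := by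
  have h : ∫ t, stdPdf t = (Real.sqrt (2 * Real.pi))⁻¹ * ∫ t : ℝ, Real.exp (-(1/2) * t ^ 2) := by
    rw [← integral_const_mul]
    congr 1; ext t; rw [stdPdf_eq]
  rw [h, integral_gaussian]
  rw [show Real.pi / (1/2) = 2 * Real.pi by ring]
  field_simp

lemma one_sub_stdCdf (z : ℝ) : 1 - stdCdf z = ∫ t in Set.Ioi z, stdPdf t := by
  have h := intervalIntegral.integral_Iic_add_Ioi (μ := volume) (b := z)
    integrable_stdPdf.integrableOn integrable_stdPdf.integrableOn
  rw [integral_stdPdf] at h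
  unfold stdCdf
  linarith

lemma hasDerivAt_neg_stdPdf (t : ℝ) : HasDerivAt (fun s => -stdPdf s) (t * stdPdf t) t := by
  have h1 : HasDerivAt (fun s : ℝ => -s ^ 2 / 2) (-t) t := by
    have := ((hasDerivAt_pow 2 t).neg).div_const 2
    simpa using this.congr_deriv (by push_cast; ring)
  have h2 : HasDerivAt (fun s : ℝ => (Real.sqrt (2 * Real.pi))⁻¹ * Real.exp (-s ^ 2 / 2))
      ((Real.sqrt (2 * Real.pi))⁻¹ * (Real.exp (-t ^ 2 / 2) * (-t))) t :=
    (h1.exp).const_mul _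
  have := h2.neg
  unfold stdPdf
  convert this using 1
  · rfl
  · rfl
  · rfl
  · ring

lemma tendsto_neg_stdPdf : Tendsto (fun t => -stdPdf t) atTop (𝓝 0) := by
  have h1 : Tendsto (fun t : ℝ => -t ^ 2 / 2) atTop atBot := by
    apply Filter.Tendsto.atBot_div_const (by norm_num)
    exact tendsto_neg_atBot_iff.mpr (tendsto_pow_atTop (by norm_num))
  have h2 : Tendsto stdPdf atTop (𝓝 0) := by
    have h3 := (Real.tendsto_exp_atBot.comp h1).const_mul (Real.sqrt (2 * Real.pi))⁻¹
    have heq : stdPdf = fun t => (Real.sqrt (2 * Real.pi))⁻¹ * Real.exp (-t ^ 2 / 2) := rfl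
    rw [heq]
    simpa [Function.comp] using h3
  simpa using h2.neg

lemma integral_mul_stdPdf (z : ℝ) (hz : 0 < z) :
    ∫ t in Set.Ioi z, t * stdPdf t = stdPdf z := by
  have h := integral_Ioi_of_hasDerivAt_of_nonneg'
    (g := fun s => -stdPdf s) (g' := fun t => t * stdPdf t) (a := z)
    (fun x _ => hasDerivAt_neg_stdPdf x)
    (fun x hx => mul_nonneg (le_of_lt (hz.trans hx)) (stdPdf_pos x).le)
    tendsto_neg_stdPdf
  simpa using h

lemma mills (z : ℝ) (hz : 0 < z) : z * (1 - stdCdf z) ≤ stdPdf z := by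
  have hint : IntegrableOn (fun t => t * stdPdf t) (Set.Ioi z) := by
    apply integrableOn_Ioi_deriv_of_nonneg' (fun x _ => hasDerivAt_neg_stdPdf x)
      (fun x hx => mul_nonneg (le_of_lt (hz.trans hx)) (stdPdf_pos x).le) tendsto_neg_stdPdf
  have hmono : ∫ t in Set.Ioi z, z * stdPdf t ≤ ∫ t in Set.Ioi z, t * stdPdf t := by
    apply setIntegral_mono_on (integrable_stdPdf.integrableOn.const_mul z) hint measurableSet_Ioi
    intro x hx
    exact mul_le_mul_of_nonneg_right (le_of_lt hx) (stdPdf_pos x).le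
  rw [integral_const_mul, integral_mul_stdPdf z hz] at hmono
  rw [one_sub_stdCdf]
  exact hmono

lemma one_sub_stdCdf_nonneg (z : ℝ) : 0 ≤ 1 - stdCdf z := by
  rw [one_sub_stdCdf]
  exact setIntegral_nonneg measurableSet_Ioi (fun x _ => (stdPdf_pos x).le)

lemma one_sub_stdCdf_pos (z : ℝ) : 0 < 1 - stdCdf z := by
  rw [one_sub_stdCdf]
  rw [setIntegral_pos_iff_support_of_nonneg_ae
    (Filter.Eventually.of_forall fun x => (stdPdf_pos x).le) integrable_stdPdf.integrableOn]
  have : Function.support stdPdf = Set.univ := by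
    ext x; simp [Function.support, (stdPdf_pos x).ne']
  rw [this, Set.univ_inter]
  simp [Real.volume_Ioi]


/-- 2 + ((1 − Φ(z))/φ(z))·(σ − z) is positive for σ > 0, and > 1 for z > 0. -/
theorem virtual_valuation_derivative_pos (σ z : ℝ) (hσ : 0 < σ) :
    0 < 2 + (1 - stdCdf z) / stdPdf z * (σ - z) ∧
      (0 < z → 1 < 2 + (1 - stdCdf z) / stdPdf z * (σ - z)) := by
  set M := (1 - stdCdf z) / stdPdf z with hM
  have hMpos : 0 < M := div_pos (one_sub_stdCdf_pos z) (stdPdf_pos z)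
  by_cases hc : z ≤ σ
  · have h1 : 0 ≤ M * (σ - z) := mul_nonneg hMpos.le (by linarith)
    constructor <;> intros <;> linarith
  · push_neg at hc
    have hz : 0 < z := hσ.trans hc
    have hm := mills z hz
    have hMz : M * z ≤ 1 := by
      rw [hM, div_mul_eq_mul_div, div_le_one (stdPdf_pos z)]
      linarith
    have hgt : 1 < 2 + M * (σ - z) := by nlinarith
    exact ⟨by linarith, fun _ => hgt⟩
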